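/- Let h1, h2 ∈ R^d be unit vectors and let h̃1, h̃2 ∈ {-1,1}^d satisfy ‖hᵢ - h̃ᵢ‖₂ ≤ ε for i = 1, 2. If cos(h1, h2) ≥ 1 - κ and √κ < √2·(1/√d - ε), then h̃1 = h̃2. -/

import Mathlib

theorem stmt_2 (d : ℕ) (hd : 1 ≤ d) (ε κ : ℝ) (hε : 0 ≤ ε) (hκ : 0 ≤ κ)
    (h1 h2 ht1 ht2 : EuclideanSpace ℝ (Fin d))
    (hh1 : ‖h1‖ = 1) (hh2 : ‖h2‖ = 1)
    (hs1 : ∀ i, ht1 i = 1 ∨ ht1 i = -1) (hs2 : ∀ i, ht2 i = 1 ∨ ht2 i = -1)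
    (he1 : ‖h1 - ht1‖ ≤ ε) (he2 : ‖h2 - ht2‖ ≤ ε)
    (hcos : (1 : ℝ) - κ ≤ inner ℝ h1 h2)
    (hκd : Real.sqrt κ < Real.sqrt 2 * (1 / Real.sqrt d - ε)) :
    ht1 = ht2 := by
  by_contra hne
  obtain ⟨i, hi⟩ : ∃ i, ht1 i ≠ ht2 i := by
    by_contra h
    push_neg at h
    exact hne (PiLp.ext h)
  have hcoord : |ht1 i - ht2 i| = 2 := by
    rcases hs1 i with h1' | h1' <;> rcases hs2 i with h2' | h2' <;>
      simp [h1', h2'] at hi ⊢ <;> norm_num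
  -- |x i| ≤ ‖x‖ in EuclideanSpace
  have hle : (2:ℝ) ≤ ‖ht1 - ht2‖ := by
    have h3 : |(ht1 - ht2) i| ≤ ‖ht1 - ht2‖ := by
      rw [EuclideanSpace.norm_eq, ← Real.sqrt_sq_eq_abs]
      apply Real.sqrt_le_sqrt
      simp only [Real.norm_eq_abs, sq_abs]
      exact Finset.single_le_sum (f := fun j => ((ht1 - ht2) j)^2)
        (fun j _ => sq_nonneg _) (Finset.mem_univ i)
    have h2' : (ht1 - ht2) i = ht1 i - ht2 i := rfl
    rw [h2', hcoord] at h3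
    exact h3
  -- ‖h1 - h2‖ ≤ √(2κ)
  have h12 : ‖h1 - h2‖ ≤ Real.sqrt (2 * κ) := by
    rw [Real.le_sqrt (norm_nonneg _) (by positivity)]
    have := @norm_sub_sq_real (EuclideanSpace ℝ (Fin d)) _ _ h1 h2
    rw [hh1, hh2] at this
    rw [this]
    nlinarith [hcos]
  have hsq2 : Real.sqrt (2 * κ) = Real.sqrt 2 * Real.sqrt κ := Real.sqrt_mul (by norm_num) _
  have hdinv : (1:ℝ) / Real.sqrt d ≤ 1 := by
    have hd1 : (1:ℝ) ≤ Real.sqrt d := by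
      rw [show (1:ℝ) = Real.sqrt 1 from (Real.sqrt_one).symm]
      exact Real.sqrt_le_sqrt (by exact_mod_cast hd)
    rw [div_le_one (by linarith)]
    exact hd1
  have htri : ‖ht1 - ht2‖ ≤ ε + Real.sqrt (2*κ) + ε := by
    have : ht1 - ht2 = -(h1 - ht1) + (h1 - h2) + (h2 - ht2) := by abel
    rw [this]
    calc ‖-(h1 - ht1) + (h1 - h2) + (h2 - ht2)‖
        ≤ ‖-(h1 - ht1) + (h1 - h2)‖ + ‖h2 - ht2‖ := norm_add_le _ _
      _ ≤ ‖-(h1 - ht1)‖ + ‖h1 - h2‖ + ‖h2 - ht2‖ := by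
          gcongr; exact norm_add_le _ _
      _ ≤ ε + Real.sqrt (2*κ) + ε := by rw [norm_neg]; gcongr
  have hs2' : Real.sqrt 2 * Real.sqrt κ < 2 / Real.sqrt d - 2 * ε := by
    have h2pos : (0:ℝ) < Real.sqrt 2 := Real.sqrt_pos.mpr (by norm_num)
    nlinarith [Real.sq_sqrt (show (0:ℝ) ≤ 2 by norm_num), hκd,
      Real.sqrt_nonneg κ, mul_lt_mul_of_pos_left hκd h2pos]
  have : (2:ℝ)/Real.sqrt d ≤ 2 := by rw [show (2:ℝ)/Real.sqrt d = 2*(1/Real.sqrt d) by ring]; linarith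
  linarith [hsq2 ▸ h12]
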